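/- Let n be odd. Then for all l with 0 ≤ 2l ≤ n, one has |K_{2l}((n-1)/2, n)| = C((n-1)/2, l). -/

import Mathlib

/-! $K_i(k, n)$ is the coefficient of $x^i$ in $(1-x)^k (1+x)^{n-k}$. For $n = 2m+1$ and
$k = m$ this generating polynomial is $(1-x^2)^m (1+x)$, whose coefficient of $x^{2l}$ is that of
$(1-x^2)^m$, namely $(-1)^l \binom{m}{l}$. -/

open Finset

def K (i k n : ℕ) : ℤ :=
  ∑ j ∈ Finset.range (i + 1), (-1) ^ j * (Nat.choose k j) * (Nat.choose (n - k) (i - j))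

open Polynomial

theorem Polynomial.coeff_one_sub_X_pow {R : Type*} [CommRing R] (m k : ℕ) :
    ((1 - X : R[X]) ^ m).coeff k = (-1) ^ k * (m.choose k : R) := by
  have h : (1 - X : R[X]) ^ m = ((1 + X) ^ m).comp (C (-1) * X) := by
    simp only [pow_comp, add_comp, one_comp, X_comp, map_neg, map_one, neg_one_mul,
      ← sub_eq_add_neg]
  rw [h, comp_C_mul_X_coeff, coeff_one_add_X_pow, mul_comm]

theorem Polynomial.coeff_expand_mul_X_mul {R : Type*} [CommSemiring R] {p : ℕ} (hp : 1 < p)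
    (f : R[X]) (l : ℕ) : (expand R p f * X).coeff (p * l) = 0 := by
  rw [← pow_one X, coeff_mul_X_pow', coeff_expand (by omega)]
  split_ifs with hpos hdvd
  · have : p ∣ 1 := by
      simpa [Nat.sub_sub_self hpos] using Nat.dvd_sub (dvd_mul_right p l) hdvd
    exact absurd (Nat.le_of_dvd one_pos this) (by omega)
  all_goals rfl

theorem K_eq_coeff (i k n : ℕ) :
    K i k n = ((1 - X : ℤ[X]) ^ k * (1 + X) ^ (n - k)).coeff i := by
  rw [coeff_mul, Nat.sum_antidiagonal_eq_sum_range_succ_mk, K]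
  simp only [coeff_one_sub_X_pow, coeff_one_add_X_pow]

theorem K_two_mul_two_mul_add_one (m l : ℕ) :
    K (2 * l) m (2 * m + 1) = (-1) ^ l * m.choose l := by
  have hfactor : (1 - X : ℤ[X]) ^ m * (1 + X) ^ (2 * m + 1 - m)
      = expand ℤ 2 ((1 - X) ^ m) * 1 + expand ℤ 2 ((1 - X) ^ m) * X := by
    rw [show 2 * m + 1 - m = m + 1 by omega, map_pow, map_sub, map_one, expand_X,
      pow_succ, ← mul_assoc, ← mul_pow]
    ring
  rw [K_eq_coeff, hfactor, coeff_add, coeff_expand_mul_X_mul one_lt_two, mul_one,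
    coeff_expand_mul' two_pos, coeff_one_sub_X_pow, add_zero]

theorem stmt10_general (n l : ℕ) (hn : Odd n) :
    |K (2 * l) ((n - 1) / 2) n| = (Nat.choose ((n - 1) / 2) l : ℤ) := by
  obtain ⟨m, rfl⟩ := hn
  rw [show (2 * m + 1 - 1) / 2 = m by omega, K_two_mul_two_mul_add_one, abs_mul, abs_neg_one_pow,
    one_mul, Nat.abs_cast]

theorem stmt10 (n l : ℕ) (hn : Odd n) (hl : 2 * l ≤ n) :
    |K (2 * l) ((n - 1) / 2) n| = (Nat.choose ((n - 1) / 2) l : ℤ) :=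
  stmt10_general n l hn
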